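/- arXiv:2104.02677 — 2 statements merged into one kernel-verified Lean document; each statement's English description precedes it below -/
import Mathlib

section
/- (Soundness, item 4, left time robustness.) For every STL formula φ, every signal x : {0,…,H} → ℝⁿ, and every time t ∈ {0,…,H}: if the characteristic function satisfies χ_φ(x,t) = −1, then the left time robustness satisfies θ⁻_φ(x,t) ≤ 0. -/
namespace STLTime

/-- STL formulas over states in `ℝⁿ`: predicates `μ(x) ≥ 0`, negation,
conjunction, and bounded Until `U_[a,b]` with `a ≤ b`. -/
inductive STL (n : ℕ) : Type where
  | pred : ((Fin n → ℝ) → ℝ) → STL n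
  | not  : STL n → STL n
  | and  : STL n → STL n → STL n
  | untl : (a b : ℕ) → a ≤ b → STL n → STL n → STL n

/-- Characteristic function `χ_φ(x,t) ∈ {-1,+1}` over horizon `H`. -/
noncomputable def chi {n : ℕ} (H : ℕ) (x : ℕ → Fin n → ℝ) : STL n → ℕ → ℤ
  | .pred μ, t => if 0 ≤ μ (x t) then 1 else -1
  | .not φ, t => - chi H x φ t
  | .and φ₁ φ₂, t => min (chi H x φ₁ t) (chi H x φ₂ t)
  | .untl a b _ φ₁ φ₂, t =>
      if h : (Finset.Icc (t + a) (min (t + b) H)).Nonempty then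
        (Finset.Icc (t + a) (min (t + b) H)).sup' h fun t' =>
          (Finset.Ico t t').fold min (chi H x φ₂ t') fun t'' => chi H x φ₁ t''
      else -1

/-- Right time robustness `θ⁺_φ(x,t)` over horizon `H`. -/
noncomputable def thetaPlus {n : ℕ} (H : ℕ) (x : ℕ → Fin n → ℝ) : STL n → ℕ → ℤ
  | .pred μ, t =>
      chi H x (.pred μ) t *
        ((sSup {τ : ℕ | t + τ ≤ H ∧
            ∀ t' ∈ Set.Icc t (t + τ),
              chi H x (.pred μ) t' = chi H x (.pred μ) t} : ℕ) : ℤ)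
  | .not φ, t => - thetaPlus H x φ t
  | .and φ₁ φ₂, t => min (thetaPlus H x φ₁ t) (thetaPlus H x φ₂ t)
  | .untl a b _ φ₁ φ₂, t =>
      if h : (Finset.Icc (t + a) (min (t + b) H)).Nonempty then
        (Finset.Icc (t + a) (min (t + b) H)).sup' h fun t' =>
          (Finset.Ico t t').fold min (thetaPlus H x φ₂ t') fun t'' => thetaPlus H x φ₁ t''
      else -1

/-- Left time robustness `θ⁻_φ(x,t)` over horizon `H`. -/
noncomputable def thetaMinus {n : ℕ} (H : ℕ) (x : ℕ → Fin n → ℝ) : STL n → ℕ → ℤ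
  | .pred μ, t =>
      chi H x (.pred μ) t *
        ((sSup {τ : ℕ | τ ≤ t ∧
            ∀ t' ∈ Set.Icc (t - τ) t,
              chi H x (.pred μ) t' = chi H x (.pred μ) t} : ℕ) : ℤ)
  | .not φ, t => - thetaMinus H x φ t
  | .and φ₁ φ₂, t => min (thetaMinus H x φ₁ t) (thetaMinus H x φ₂ t)
  | .untl a b _ φ₁ φ₂, t =>
      if h : (Finset.Icc (t + a) (min (t + b) H)).Nonempty then
        (Finset.Icc (t + a) (min (t + b) H)).sup' h fun t' =>
          (Finset.Ico t t').fold min (thetaMinus H x φ₂ t') fun t'' => thetaMinus H x φ₁ t''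
      else -1


lemma chi_bounds {n : ℕ} (H : ℕ) (x : ℕ → Fin n → ℝ) :
    ∀ (φ : STL n) (t : ℕ), -1 ≤ chi H x φ t ∧ chi H x φ t ≤ 1 := by
  intro φ
  induction φ with
  | pred μ => intro t; simp only [chi]; split <;> omega
  | not φ ih => intro t; have := ih t; simp only [chi]; omega
  | and φ₁ φ₂ ih₁ ih₂ =>
      intro t; have h1 := ih₁ t; have h2 := ih₂ t; simp only [chi]
      constructor
      · exact le_min h1.1 h2.1
      · exact le_trans (min_le_left _ _) h1.2
  | untl a b hab φ₁ φ₂ ih₁ ih₂ =>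
      intro t; simp only [chi]
      split_ifs with hne
      · constructor
        · obtain ⟨t', ht'⟩ := hne
          refine le_trans ?_ (Finset.le_sup' _ ht')
          rw [Finset.le_fold_min]
          exact ⟨(ih₂ t').1, fun i _ => (ih₁ i).1⟩
        · refine Finset.sup'_le _ _ fun t' ht' => ?_
          refine le_trans ((Finset.fold_min_le _).mpr (Or.inl le_rfl)) (ih₂ t').2
      · norm_num

lemma key {n H : ℕ} (x : ℕ → Fin n → ℝ) :
    ∀ (φ : STL n) (t : ℕ), t ≤ H →
      (chi H x φ t = 1 → 0 ≤ thetaMinus H x φ t) ∧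
      (chi H x φ t = -1 → thetaMinus H x φ t ≤ 0) := by
  intro φ
  induction φ with
  | pred μ =>
      intro t ht
      constructor <;> intro h <;> simp only [thetaMinus, h]
      · simpa using Int.natCast_nonneg _
      · simpa using Int.natCast_nonneg _
  | not φ ih =>
      intro t ht
      have h1 := (ih t ht).1
      have h2 := (ih t ht).2
      have hb := chi_bounds H x φ t
      simp only [chi, thetaMinus]
      constructor <;> intro h
      · have : chi H x φ t = -1 := by omega
        linarith [h2 this]
      · have : chi H x φ t = 1 := by omega
        linarith [h1 this]
  | and φ₁ φ₂ ih₁ ih₂ =>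
      intro t ht
      have hb1 := chi_bounds H x φ₁ t
      have hb2 := chi_bounds H x φ₂ t
      simp only [chi, thetaMinus]
      constructor <;> intro h
      · have e1 : chi H x φ₁ t = 1 := by omega
        have e2 : chi H x φ₂ t = 1 := by omega
        exact le_min ((ih₁ t ht).1 e1) ((ih₂ t ht).1 e2)
      · have : chi H x φ₁ t = -1 ∨ chi H x φ₂ t = -1 := by omega
        rcases this with e | e
        · exact le_trans (min_le_left _ _) ((ih₁ t ht).2 e)
        · exact le_trans (min_le_right _ _) ((ih₂ t ht).2 e)
  | untl a b hab φ₁ φ₂ ih₁ ih₂ =>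
      intro t ht
      simp only [chi, thetaMinus]
      split_ifs with hne
      · constructor <;> intro h
        · have : (1 : ℤ) ≤ (Finset.Icc (t + a) (min (t + b) H)).sup' hne fun t' =>
              (Finset.Ico t t').fold min (chi H x φ₂ t') fun t'' => chi H x φ₁ t'' := h.ge
          rw [Finset.le_sup'_iff] at this
          obtain ⟨t', ht', hfold⟩ := this
          have ht'H : t' ≤ H := by
            rw [Finset.mem_Icc] at ht'; omega
          rw [Finset.le_fold_min] at hfold
          refine le_trans ?_ (Finset.le_sup' _ ht')
          rw [Finset.le_fold_min]
          constructor
          · refine (ih₂ t' ht'H).1 ?_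
            have := (chi_bounds H x φ₂ t').2; omega
          · intro t'' ht''
            rw [Finset.mem_Ico] at ht''
            refine (ih₁ t'' (by omega)).1 ?_
            have h1 := hfold.2 t'' (Finset.mem_Ico.mpr ht'')
            have := (chi_bounds H x φ₁ t'').2; omega
        · refine Finset.sup'_le _ _ fun t' ht' => ?_
          have ht'H : t' ≤ H := by
            rw [Finset.mem_Icc] at ht'; omega
          have hle : ((Finset.Ico t t').fold min (chi H x φ₂ t') fun t'' => chi H x φ₁ t'')
              ≤ -1 := le_trans (Finset.le_sup' (fun t' =>
                (Finset.Ico t t').fold min (chi H x φ₂ t') fun t'' => chi H x φ₁ t'') ht') h.le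
          rw [Finset.fold_min_le] at hle
          rw [Finset.fold_min_le]
          rcases hle with h2 | ⟨t'', ht'', h1⟩
          · refine Or.inl ((ih₂ t' ht'H).2 ?_)
            have := (chi_bounds H x φ₂ t').1; omega
          · refine Or.inr ⟨t'', ht'', (ih₁ t'' ?_).2 ?_⟩
            · rw [Finset.mem_Ico] at ht''; omega
            · have := (chi_bounds H x φ₁ t'').1; omega
      · exact ⟨fun h => absurd h (by norm_num), fun _ => by norm_num⟩

/-- Soundness, item 4, left time robustness: `χ_φ(x,t) = -1 → θ⁻_φ(x,t) ≤ 0`. -/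
theorem soundness_left_viol_nonpos {n H : ℕ} (φ : STL n) (x : ℕ → Fin n → ℝ)
    (t : ℕ) (ht : t ≤ H) (h : chi H x φ t = -1) :
    thetaMinus H x φ t ≤ 0 := by
  exact (key x φ t ht).2 h

end STLTime
end

section
/- (Satisfaction guarantee for the time-robust synthesis problem.) Let φ be an STL formula, x : {0,…,H} → ℝⁿ a signal, and θ* > 0. If the right time robustness satisfies θ⁺_φ(x,0) ≥ θ*, then χ_φ(x,0) = +1, i.e., the signal x satisfies the specification φ at time 0. In particular, any trajectory feasible for the time-robust STL control synthesis problem (which imposes θ⁺_φ(x,0) ≥ θ* > 0) satisfies φ. -/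
namespace STLTime

lemma fold_min_mem {s : Finset ℕ} {b : ℤ} {f : ℕ → ℤ}
    (hb : b = 1 ∨ b = -1) (hf : ∀ i ∈ s, f i = 1 ∨ f i = -1) :
    s.fold min b f = 1 ∨ s.fold min b f = -1 := by
  induction s using Finset.cons_induction with
  | empty => simpa using hb
  | cons a s ha ih =>
      rw [Finset.fold_cons]
      have h1 := hf a (Finset.mem_cons_self a s)
      have h2 := ih (fun i hi => hf i (Finset.mem_cons_of_mem hi))
      rcases h1 with h1 | h1 <;> rcases h2 with h2 | h2 <;> rw [h1, h2] <;> simp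

lemma chi_mem {n : ℕ} (H : ℕ) (x : ℕ → Fin n → ℝ) (φ : STL n) (t : ℕ) :
    chi H x φ t = 1 ∨ chi H x φ t = -1 := by
  induction φ generalizing t with
  | pred μ => by_cases hμ : 0 ≤ μ (x t) <;> simp [chi, hμ]
  | not φ ih => rcases ih t with h | h <;> simp [chi, h]
  | and φ₁ φ₂ ih₁ ih₂ =>
      rcases ih₁ t with h1 | h1 <;> rcases ih₂ t with h2 | h2 <;> simp [chi, h1, h2]
  | untl a b hab φ₁ φ₂ ih₁ ih₂ =>
      rw [chi]
      split
      · rename_i hne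
        have key : ∀ t' ∈ Finset.Icc (t + a) (min (t + b) H),
            ((Finset.Ico t t').fold min (chi H x φ₂ t') fun t'' => chi H x φ₁ t'') = 1 ∨
            ((Finset.Ico t t').fold min (chi H x φ₂ t') fun t'' => chi H x φ₁ t'') = -1 := by
          intro t' _
          exact fold_min_mem (ih₂ t') (fun i _ => ih₁ i)
        by_cases hall : ∀ t' ∈ Finset.Icc (t + a) (min (t + b) H),
            ((Finset.Ico t t').fold min (chi H x φ₂ t') fun t'' => chi H x φ₁ t'') = -1
        · right
          apply le_antisymm
          · exact Finset.sup'_le _ _ fun t' ht' => le_of_eq (hall t' ht')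
          · obtain ⟨t', ht'⟩ := hne
            calc (-1 : ℤ) = _ := (hall t' ht').symm
              _ ≤ _ := Finset.le_sup' (fun t' => (Finset.Ico t t').fold min (chi H x φ₂ t') fun t'' => chi H x φ₁ t'') ht'
        · left
          push_neg at hall
          obtain ⟨t', ht', hne1⟩ := hall
          have h1 : ((Finset.Ico t t').fold min (chi H x φ₂ t') fun t'' => chi H x φ₁ t'') = 1 :=
            (key t' ht').resolve_right hne1
          apply le_antisymm
          · apply Finset.sup'_le
            intro t'' ht''
            rcases key t'' ht'' with h | h <;> omega
          · calc (1 : ℤ) = _ := h1.symm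
              _ ≤ _ := Finset.le_sup' (fun t' => (Finset.Ico t t').fold min (chi H x φ₂ t') fun t'' => chi H x φ₁ t'') ht'
      · right; rfl

lemma chi_sign {n : ℕ} (H : ℕ) (x : ℕ → Fin n → ℝ) (φ : STL n) (t : ℕ) :
    (0 < thetaPlus H x φ t → chi H x φ t = 1) ∧
    (thetaPlus H x φ t < 0 → chi H x φ t = -1) := by
  induction φ generalizing t with
  | pred μ =>
      rw [thetaPlus]
      rcases chi_mem H x (.pred μ) t with h | h <;> rw [h] <;>
        constructor <;> intro hp <;> omega
  | not φ ih =>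
      rw [thetaPlus, chi]
      obtain ⟨h1, h2⟩ := ih t
      constructor <;> intro hp
      · rw [h2 (by omega)]; ring
      · rw [h1 (by omega)]
  | and φ₁ φ₂ ih₁ ih₂ =>
      rw [thetaPlus, chi]
      obtain ⟨h1p, h1n⟩ := ih₁ t
      obtain ⟨h2p, h2n⟩ := ih₂ t
      constructor <;> intro hp
      · rw [lt_min_iff] at hp
        rw [h1p hp.1, h2p hp.2]; rfl
      · rw [min_lt_iff] at hp
        have b1 := chi_mem H x φ₁ t
        have b2 := chi_mem H x φ₂ t
        rcases hp with hp | hp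
        · rw [h1n hp]; omega
        · rw [h2n hp]; omega
  | untl a b hab φ₁ φ₂ ih₁ ih₂ =>
      rw [thetaPlus, chi]
      split
      · rename_i hne
        constructor <;> intro hp
        · rw [Finset.lt_sup'_iff] at hp
          obtain ⟨t', ht', hlt⟩ := hp
          have hlt1 : (1:ℤ) ≤ (Finset.Ico t t').fold min (thetaPlus H x φ₂ t')
              (fun t'' => thetaPlus H x φ₁ t'') := by omega
          rw [Finset.le_fold_min] at hlt1
          obtain ⟨hb, hfa⟩ := hlt1
          have hfold : ((Finset.Ico t t').fold min (chi H x φ₂ t') fun t'' => chi H x φ₁ t'') = 1 := by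
            have hb' : chi H x φ₂ t' = 1 := (ih₂ t').1 (by omega)
            have hfa' : ∀ i ∈ Finset.Ico t t', chi H x φ₁ i = 1 := fun i hi =>
              (ih₁ i).1 (by have := hfa i hi; omega)
            apply le_antisymm
            · rw [Finset.fold_min_le]; omega
            · rw [Finset.le_fold_min]
              exact ⟨le_of_eq hb'.symm, fun i hi => le_of_eq (hfa' i hi).symm⟩
          apply le_antisymm
          · apply Finset.sup'_le
            intro t'' ht''
            rcases fold_min_mem (s := Finset.Ico t t'') (f := fun t'' => chi H x φ₁ t'')
                (chi_mem H x φ₂ t'') (fun i _ => chi_mem H x φ₁ i) with h | h <;> omega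
          · calc (1:ℤ) = _ := hfold.symm
              _ ≤ _ := Finset.le_sup' (fun t' => (Finset.Ico t t').fold min (chi H x φ₂ t') fun t'' => chi H x φ₁ t'') ht'
        · rw [Finset.sup'_lt_iff] at hp
          apply le_antisymm
          · apply Finset.sup'_le
            intro t' ht'
            have hlt := hp t' ht'
            have hlt1 : (Finset.Ico t t').fold min (thetaPlus H x φ₂ t')
                (fun t'' => thetaPlus H x φ₁ t'') ≤ -1 := by omega
            rw [Finset.fold_min_le] at hlt1
            have hfold : ((Finset.Ico t t').fold min (chi H x φ₂ t') fun t'' => chi H x φ₁ t'') ≤ -1 := by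
              rw [Finset.fold_min_le]
              rcases hlt1 with hb | ⟨i, hi, hfi⟩
              · exact Or.inl (le_of_eq ((ih₂ t').2 (by omega)))
              · exact Or.inr ⟨i, hi, le_of_eq ((ih₁ i).2 (by omega))⟩
            exact hfold
          · obtain ⟨t', ht'⟩ := hne
            have h := fold_min_mem (s := Finset.Ico t t') (f := fun t'' => chi H x φ₁ t'')
              (chi_mem H x φ₂ t') (fun i _ => chi_mem H x φ₁ i)
            calc (-1:ℤ) ≤ (Finset.Ico t t').fold min (chi H x φ₂ t') fun t'' => chi H x φ₁ t'' := by
                  omega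
              _ ≤ _ := Finset.le_sup' (fun t' => (Finset.Ico t t').fold min (chi H x φ₂ t') fun t'' => chi H x φ₁ t'') ht'
      · exact ⟨fun hp => by omega, fun _ => rfl⟩

/-- Satisfaction guarantee for the time-robust synthesis problem: if
`θ⁺_φ(x,0) ≥ θ* > 0` then `χ_φ(x,0) = +1`. -/
theorem synthesis_satisfaction {n H : ℕ} (φ : STL n) (x : ℕ → Fin n → ℝ)
    (θstar : ℤ) (hθ : 0 < θstar) (h : θstar ≤ thetaPlus H x φ 0) :
    chi H x φ 0 = 1 := by
  exact (chi_sign H x φ 0).1 (by omega)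

end STLTime
end
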